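/- arXiv:2109.01597 — 2 statements merged into one kernel-verified Lean document; each statement's English description precedes it below -/
import Mathlib

section
/- Let a₁,…,aₙ be positive integers with gcd(a₁,…,aₙ) = 1 such that the diagonal quadratic form a₁y₁²+⋯+aₙyₙ² represents every positive integer over ℤ_p for every prime p (i.e., is locally universal). Then for every integer m ≥ 3 and every positive integer N and every prime p, the equation a₁P_m(x₁)+⋯+aₙP_m(xₙ) = N has a solution in ℤ_pⁿ; that is, the m-gonal form ⟨a₁,…,aₙ⟩_m is locally universal for all m ≥ 3. -/
/-!
Write `t = m - 2`, so that `2 P_m(x) = t x² + (2 - t) x`. If `p ∤ 2t`, completing the square with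
`yᵢ = 2t xᵢ + 2 - t` turns `∑ aᵢ · 2P_m(xᵢ) = 2N` into `∑ aᵢ yᵢ² = 8tN + (∑ aᵢ)(2 - t)²`, which is
solvable by local universality of the quadratic form. If `p ∣ 2t`, primitivity gives some `aᵢ`
prime to `p`, and the single-variable equation `aᵢ · 2P_m(x) = 2N` has a root by Hensel's lemma;
the exception is `p = 2`, `t ≡ 2 mod 4`, where one completes the square for `t / 2` instead.
-/

open Polynomial

theorem exists_sum_mul_sq_add_eq {R ι : Type*} [CommRing R] [Fintype ι] (a y : ι → R) {A B M : R}
    (hA : IsUnit A) (hy : ∑ i, a i * y i ^ 2 = A * M + (∑ i, a i) * B ^ 2) :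
    ∃ x : ι → R, ∑ i, a i * (A * x i ^ 2 + 2 * B * x i) = M := by
  obtain ⟨u, hu⟩ := hA.exists_right_inv
  refine ⟨fun i => u * (y i - B), hA.mul_left_cancel ?_⟩
  have key : ∀ i, A * (a i * (A * (u * (y i - B)) ^ 2 + 2 * B * (u * (y i - B)))) =
      a i * y i ^ 2 - a i * B ^ 2 := fun i => by
    linear_combination a i * ((y i - B) ^ 2 * (A * u + 1) + 2 * B * (y i - B)) * hu
  rw [Finset.mul_sum, Finset.sum_congr rfl fun i _ => key i, Finset.sum_sub_distrib, hy,
    Finset.sum_mul]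
  ring

theorem Finset.exists_not_dvd_of_gcd_eq_one {α ι : Type*} [CommMonoidWithZero α]
    [NormalizedGCDMonoid α] {s : Finset ι} {a : ι → α} (h : s.gcd a = 1) {q : α}
    (hq : ¬ IsUnit q) : ∃ i ∈ s, ¬ q ∣ a i := by
  by_contra! hdvd
  exact hq (isUnit_of_dvd_one (h ▸ Finset.dvd_gcd hdvd))

namespace PadicInt

variable {p : ℕ} [Fact p.Prime] {ι : Type*} [Fintype ι]

theorem isUnit_intCast_of_not_dvd {k : ℤ} (h : ¬ (p : ℤ) ∣ k) : IsUnit (k : ℤ_[p]) := by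
  by_contra hk
  exact h (norm_intCast_lt_one_iff.1 (not_isUnit_iff.1 hk))

variable (p) in
/-- `t` stands for `m - 2`, so that the summands are `aᵢ · 2P_m(xᵢ)`. -/
def PolygonalRepresents (a : ι → ℤ) (t N : ℤ) : Prop :=
  ∃ x : ι → ℤ_[p],
    ∑ i, (a i : ℤ_[p]) * ((t : ℤ_[p]) * (x i ^ 2 - x i) + 2 * x i) = 2 * (N : ℤ_[p])

theorem PolygonalRepresents.of_single {a : ι → ℤ} {t N : ℤ} (i₀ : ι)
    (h : ∃ c : ℤ_[p], (a i₀ : ℤ_[p]) * (t * (c ^ 2 - c) + 2 * c) = 2 * N) :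
    PolygonalRepresents p a t N := by
  classical
  obtain ⟨c, hc⟩ := h
  refine ⟨Pi.single i₀ c, ?_⟩
  rw [Finset.sum_eq_single i₀ (fun i _ hi => by simp [hi]) (by simp)]
  simpa using hc

theorem polygonalRepresents_of_not_dvd {a : ι → ℤ} (hS : 0 ≤ ∑ i, a i)
    (hloc : ∀ N : ℤ, 0 < N → ∃ y : ι → ℤ_[p], ∑ i, (a i : ℤ_[p]) * y i ^ 2 = N)
    {t : ℤ} (ht : 0 < t) (hpt : ¬ (p : ℤ) ∣ 2 * t) {N : ℤ} (hN : 0 < N) :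
    PolygonalRepresents p a t N := by
  obtain ⟨y, hy⟩ := hloc (2 * t * (4 * N) + (∑ i, a i) * (2 - t) ^ 2)
    (add_pos_of_pos_of_nonneg (by positivity) (mul_nonneg hS (sq_nonneg _)))
  obtain ⟨x, hx⟩ := exists_sum_mul_sq_add_eq _ y (isUnit_intCast_of_not_dvd hpt)
    (M := ((4 * N : ℤ) : ℤ_[p])) (B := ((2 - t : ℤ) : ℤ_[p])) (by rw [hy]; push_cast; ring)
  refine ⟨x, mul_left_cancel₀ (two_ne_zero' ℤ_[p]) ?_⟩
  have hterm : ∀ i, 2 * ((a i : ℤ_[p]) * ((t : ℤ_[p]) * (x i ^ 2 - x i) + 2 * x i)) =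
      a i * (((2 * t : ℤ) : ℤ_[p]) * x i ^ 2 + 2 * ((2 - t : ℤ) : ℤ_[p]) * x i) := fun i => by
    push_cast; ring
  rw [Finset.mul_sum, Finset.sum_congr rfl fun i _ => hterm i, hx]
  push_cast; ring

theorem polygonalRepresents_two_of_odd {a : ι → ℤ} (hS : 0 ≤ ∑ i, a i)
    (hloc : ∀ N : ℤ, 0 < N → ∃ y : ι → ℤ_[2], ∑ i, (a i : ℤ_[2]) * y i ^ 2 = N)
    {s : ℤ} (hs : Odd s) (hs₀ : 0 < s) {N : ℤ} (hN : 0 < N) :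
    PolygonalRepresents 2 a (2 * s) N := by
  obtain ⟨k, rfl⟩ := hs
  obtain ⟨y, hy⟩ := hloc ((2 * k + 1) * N + (∑ i, a i) * (-k) ^ 2)
    (add_pos_of_pos_of_nonneg (mul_pos hs₀ hN) (mul_nonneg hS (sq_nonneg _)))
  obtain ⟨x, hx⟩ := exists_sum_mul_sq_add_eq _ y
    (isUnit_intCast_of_not_dvd (k := 2 * k + 1) (by omega))
    (M := (N : ℤ_[2])) (B := ((-k : ℤ) : ℤ_[2])) (by rw [hy]; push_cast; ring)
  refine ⟨x, ?_⟩
  rw [← hx, Finset.mul_sum]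
  refine Finset.sum_congr rfl fun i _ => ?_
  push_cast; ring

theorem exists_polygonal_root_of_norm_lt {a t N : ℤ} {x₀ : ℤ_[p]}
    (h : ‖(a : ℤ_[p]) * (t * (x₀ ^ 2 - x₀) + 2 * x₀) - 2 * N‖ <
      ‖(a : ℤ_[p]) * (2 * t * x₀ - t + 2)‖ ^ 2) :
    ∃ c : ℤ_[p], (a : ℤ_[p]) * (t * (c ^ 2 - c) + 2 * c) = 2 * N := by
  let F : ℤ[X] := C a * (C t * (X ^ 2 - X) + 2 * X) - C (2 * N)
  have hF : ∀ z : ℤ_[p], aeval z F = a * (t * (z ^ 2 - z) + 2 * z) - 2 * N := fun z => by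
    simp [F, map_ofNat]
  have hF' : ∀ z : ℤ_[p], aeval z (derivative F) = a * (2 * t * z - t + 2) := fun z => by
    simp [F, map_ofNat, -mul_eq_mul_left_iff]; ring
  obtain ⟨c, hc, -⟩ := hensels_lemma (F := F) (a := x₀) (by rwa [hF, hF'])
  exact ⟨c, sub_eq_zero.1 (by rwa [hF] at hc)⟩

theorem exists_polygonal_root_of_dvd {a t N x₀ : ℤ}
    (hf : (p : ℤ) ∣ a * (t * (x₀ ^ 2 - x₀) + 2 * x₀) - 2 * N)
    (hf' : IsCoprime (a * (2 * t * x₀ - t + 2)) p) :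
    ∃ c : ℤ_[p], (a : ℤ_[p]) * (t * (c ^ 2 - c) + 2 * c) = 2 * N := by
  refine exists_polygonal_root_of_norm_lt (x₀ := (x₀ : ℤ_[p])) ?_
  have h := norm_intCast_lt_one_iff.2 hf
  have h' := norm_intCast_eq_one_iff.2 hf'
  push_cast at h h'
  rwa [h', one_pow]

theorem exists_polygonal_root_of_ne_two (hp : p ≠ 2) {a t : ℤ} (ha : ¬ (p : ℤ) ∣ a)
    (ht : (p : ℤ) ∣ 2 * t) (N : ℤ) :
    ∃ c : ℤ_[p], (a : ℤ_[p]) * (t * (c ^ 2 - c) + 2 * c) = 2 * N := by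
  have hpp : Prime (p : ℤ) := Nat.prime_iff_prime_int.1 Fact.out
  have hp2 : ¬ (p : ℤ) ∣ 2 := by
    exact_mod_cast (Nat.prime_dvd_prime_iff_eq Fact.out Nat.prime_two).not.2 hp
  obtain ⟨s, rfl⟩ := (hpp.dvd_or_dvd ht).resolve_left hp2
  obtain ⟨u, v, huv⟩ := hpp.coprime_iff_not_dvd.2 ha
  apply exists_polygonal_root_of_dvd (x₀ := v * N)
  · exact ⟨s * a * ((v * N) ^ 2 - v * N) - 2 * u * N, by linear_combination (2 * N) * huv⟩
  · have h2a : IsCoprime (2 * a) p :=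
      (hpp.coprime_iff_not_dvd.2 hp2).symm.mul_left (hpp.coprime_iff_not_dvd.2 ha).symm
    rw [show a * (2 * (p * s) * (v * N) - p * s + 2) = 2 * a + a * (2 * s * (v * N) - s) * p by
      ring]
    exact h2a.add_mul_right_left _

theorem exists_polygonal_root_two_of_odd {a t : ℤ} (ha : Odd a) (ht : Odd t) (N : ℤ) :
    ∃ c : ℤ_[2], (a : ℤ_[2]) * (t * (c ^ 2 - c) + 2 * c) = 2 * N := by
  refine exists_polygonal_root_of_dvd (x₀ := 0) ⟨-N, by push_cast; ring⟩ ?_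
  push_cast
  refine Int.isCoprime_two_right.2 (ha.mul ?_)
  simpa using ht.sub_even (even_two (α := ℤ))

theorem exists_polygonal_root_two_of_four_dvd {a t : ℤ} (ha : Odd a) (ht : 4 ∣ t) (N : ℤ) :
    ∃ c : ℤ_[2], (a : ℤ_[2]) * (t * (c ^ 2 - c) + 2 * c) = 2 * N := by
  obtain ⟨w, rfl⟩ := ht
  obtain ⟨u, v, huv⟩ : IsCoprime ((2 : ℤ) ^ 2) a := (Int.isCoprime_two_left.2 ha).pow_left
  obtain ⟨k, hk⟩ := Int.even_mul_pred_self (v * N)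
  refine exists_polygonal_root_of_norm_lt (x₀ := ((v * N : ℤ) : ℤ_[2])) ?_
  have hf : ‖((a * (4 * w * ((v * N) ^ 2 - v * N) + 2 * (v * N)) - 2 * N : ℤ) : ℤ_[2])‖ ≤
      (2 : ℝ) ^ (-3 : ℤ) :=
    norm_int_le_pow_iff_dvd.2
      ⟨a * w * k - u * N, by linear_combination (4 * a * w) * hk + 2 * N * huv⟩
  have hf' : ‖((a * (2 * (4 * w) * (v * N) - 4 * w + 2) : ℤ) : ℤ_[2])‖ = 2⁻¹ := by
    have hodd : IsCoprime (a * (4 * w * (v * N) - 2 * w + 1)) 2 :=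
      Int.isCoprime_two_right.2 (ha.mul ⟨2 * w * (v * N) - w, by ring⟩)
    rw [show a * (2 * (4 * w) * (v * N) - 4 * w + 2) = 2 * (a * (4 * w * (v * N) - 2 * w + 1)) by
      ring, Int.cast_mul, norm_mul, norm_intCast_eq_one_iff.2 hodd, mul_one]
    simpa using norm_p (p := 2)
  push_cast at hf hf' ⊢
  rw [hf']
  refine hf.trans_lt ?_
  norm_num

end PadicInt

open PadicInt

/-- if the diagonal quadratic form `Σ aᵢyᵢ²` (with `gcd(a₁,…,aₙ) = 1`) represents
every positive integer over `ℤ_p` for every prime `p`, then for every `m ≥ 3` the `m`-gonal form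
`⟨a₁,…,aₙ⟩ₘ` is locally universal, i.e. `Σ aᵢP_m(xᵢ) = N` is solvable over `ℤ_p` for every
positive integer `N` and every prime `p`.  The `m`-gonal equation is stated multiplied by `2`
(an equivalent formulation, since `2` is a nonzerodivisor in `ℤ_p`). -/
theorem stmt13 (n : ℕ) (a : Fin n → ℤ) (ha : ∀ i, 0 < a i)
    (hprim : Finset.univ.gcd a = 1)
    (hloc : ∀ (p : ℕ) [Fact p.Prime], ∀ N : ℤ, 0 < N →
      ∃ y : Fin n → ℤ_[p], ∑ i, (a i : ℤ_[p]) * (y i) ^ 2 = (N : ℤ_[p])) :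
    ∀ m : ℤ, 3 ≤ m → ∀ N : ℤ, 0 < N → ∀ (p : ℕ) [Fact p.Prime],
      ∃ x : Fin n → ℤ_[p],
        ∑ i, (a i : ℤ_[p]) * (((m : ℤ_[p]) - 2) * ((x i) ^ 2 - x i) + 2 * x i)
          = 2 * (N : ℤ_[p]) := by
  intro m hm N hN p _
  have hS : 0 ≤ ∑ i, a i := Finset.sum_nonneg fun i _ => (ha i).le
  obtain ⟨t, rfl⟩ : ∃ t, m = t + 2 := ⟨m - 2, by ring⟩
  suffices PolygonalRepresents p a t N by simpa [PolygonalRepresents] using this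
  rcases em' ((p : ℤ) ∣ 2 * t) with hpt | hpt
  · exact polygonalRepresents_of_not_dvd hS (hloc p) (by omega) hpt hN
  obtain ⟨i₀, -, hi₀⟩ := Finset.exists_not_dvd_of_gcd_eq_one hprim
    (Nat.prime_iff_prime_int.1 (Fact.out : p.Prime)).not_isUnit
  rcases eq_or_ne p 2 with rfl | hp2
  · have ha₀ : Odd (a i₀) := Int.odd_iff.2 (by simpa using hi₀)
    obtain ⟨s, rfl | rfl⟩ := Int.even_or_odd' t
    · rcases Int.even_or_odd s with ⟨w, rfl⟩ | hs
      · exact .of_single i₀ (exists_polygonal_root_two_of_four_dvd ha₀ ⟨w, by ring⟩ N)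
      · exact polygonalRepresents_two_of_odd hS (hloc 2) hs (by omega) hN
    · exact .of_single i₀ (exists_polygonal_root_two_of_odd ha₀ (odd_two_mul_add_one s) N)
  · exact .of_single i₀ (exists_polygonal_root_of_ne_two hp2 hi₀ hpt N)
end

section
/- Let (a₁,a₂,a₃,a₄,a₅) be a tuple of positive integers with a₁ = 1 and aᵢ ≤ a_{i+1} ≤ a₁+⋯+aᵢ+1 for i = 1,2,3,4. Then the diagonal quadratic form a₁y₁²+a₂y₂²+a₃y₃²+a₄y₄²+a₅y₅² represents every positive integer over ℤ_p for every prime p; that is, it is locally universal. -/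
/-!
Multiplying a representation by `p` shows that it suffices to represent `N` with `p² ∤ N`, and
the escalator bounds `a₁ ≤ 2`, `a₂ ≤ 4`, `a₃ ≤ 8` make the last coefficient superfluous.

For odd `p` a binary form `c x² + d y²` with unit coefficients represents every unit: by
pigeonhole it does so over `𝔽_p`, and Hensel's lemma lifts a solution with a nonzero coordinate.
Hence `x² + a₁ y²` represents `N` when `p ∤ N`, and `N - a₂` or `N - a₃` when `p ∥ N`, unless
`p ∣ a₂` and `p ∣ a₃`, which forces `p = 3 = a₂`, `a₃ ∈ {3, 6}`.

For `p = 2`, every element of `1 + 8ℤ₂` is a square, so an integer vector `x` with an odd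
coordinate `xᵢ` and `8aᵢ ∣ N - Q(x)` in `ℤ₂` lifts to a solution of `Q(y) = N`; such an `x`
with entries in `{0, 1, 2}` is found for every residue of `N` mod 16 by a finite search.
-/

namespace PadicInt

open Polynomial

variable {p : ℕ} [Fact p.Prime]

theorem exists_mul_sq_eq_of_norm_lt {c m x : ℤ_[p]} (h : ‖c * x ^ 2 - m‖ < ‖2 * c * x‖ ^ 2) :
    ∃ y, c * y ^ 2 = m := by
  have hF : derivative (C c * X ^ 2 - C m) = C (2 * c) * X := by
    simp only [derivative_sub, derivative_C, sub_zero, derivative_C_mul_X_pow, map_mul]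
    simp [mul_comm]
  obtain ⟨y, hy, -⟩ := hensels_lemma (F := C c * X ^ 2 - C m) (a := x) (by simpa [hF] using h)
  exact ⟨y, sub_eq_zero.mp (by simpa using hy)⟩

theorem isUnit_intCast_iff {k : ℤ} : IsUnit (k : ℤ_[p]) ↔ ¬(p : ℤ) ∣ k := by
  rw [isUnit_iff, ← norm_int_lt_one_iff_dvd, not_lt]
  exact ⟨ge_of_eq, (norm_le_one _).antisymm⟩

theorem toZMod_ne_zero_iff {x : ℤ_[p]} : toZMod x ≠ 0 ↔ IsUnit x := by
  rw [ne_eq, ← RingHom.mem_ker, ker_toZMod, IsLocalRing.mem_maximalIdeal, mem_nonunits_iff,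
    not_not]

theorem exists_mul_sq_eq_of_toZMod_eq (hp : p ≠ 2) {c m x : ℤ_[p]} (hc : IsUnit c)
    (hx : IsUnit x) (h : toZMod (c * x ^ 2) = toZMod m) : ∃ y, c * y ^ 2 = m := by
  have h2 : IsUnit (2 : ℤ_[p]) := by
    exact_mod_cast isUnit_intCast_iff.mpr fun h2 =>
      hp ((Nat.prime_dvd_prime_iff_eq Fact.out Nat.prime_two).mp (by exact_mod_cast h2))
  refine exists_mul_sq_eq_of_norm_lt (x := x) ?_
  rw [isUnit_iff.mp ((h2.mul hc).mul hx), one_pow, ← not_isUnit_iff, ← toZMod_ne_zero_iff,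
    not_not, map_sub, h, sub_self]

theorem exists_sq_eq_one_add_eight_mul (z : ℤ_[2]) : ∃ y, y ^ 2 = 1 + 8 * z := by
  have h2 : ‖(2 : ℤ_[2])‖ = 2⁻¹ := by exact_mod_cast norm_p (p := 2)
  obtain ⟨y, hy⟩ := exists_mul_sq_eq_of_norm_lt (c := 1) (m := 1 + 8 * z) (x := 1) (by
    calc ‖1 * 1 ^ 2 - (1 + 8 * z)‖ = ‖(2 : ℤ_[2])‖ ^ 3 * ‖z‖ := by
          rw [← norm_pow, ← norm_mul]; ring_nf; rw [norm_neg]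
      _ ≤ ‖(2 : ℤ_[2])‖ ^ 3 := mul_le_of_le_one_right (by positivity) (norm_le_one z)
      _ < ‖2 * 1 * (1 : ℤ_[2])‖ ^ 2 := by rw [mul_one, mul_one, h2]; norm_num)
  exact ⟨y, by simpa using hy⟩

theorem exists_mul_sq_eq_of_eight_mul_dvd {c m x : ℤ_[2]} (hx : IsUnit x)
    (h : 8 * c ∣ m - c * x ^ 2) : ∃ y, c * y ^ 2 = m := by
  obtain ⟨k, hk⟩ := h
  obtain ⟨u, rfl⟩ := hx
  obtain ⟨z, hz⟩ := exists_sq_eq_one_add_eight_mul (k * (↑u⁻¹ : ℤ_[2]) ^ 2)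
  refine ⟨u * z, ?_⟩
  rw [mul_pow, hz]
  linear_combination -hk + 8 * c * k * (u * ↑u⁻¹ + 1) * u.mul_inv

theorem exists_mul_sq_add_mul_sq_eq_of_toZMod (hp : p ≠ 2) {c d m : ℤ_[p]} (hc : IsUnit c)
    {x₀ y₀ : ZMod p} (hx₀ : x₀ ≠ 0) (h : toZMod c * x₀ ^ 2 + toZMod d * y₀ ^ 2 = toZMod m) :
    ∃ x y, c * x ^ 2 + d * y ^ 2 = m := by
  obtain ⟨x', rfl⟩ := ZMod.ringHom_surjective toZMod x₀
  obtain ⟨y, rfl⟩ := ZMod.ringHom_surjective toZMod y₀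
  obtain ⟨x, hx⟩ := exists_mul_sq_eq_of_toZMod_eq hp hc (toZMod_ne_zero_iff.mp hx₀)
    (m := m - d * y ^ 2) (by
    simp only [map_sub, map_mul, map_pow, ← h, add_sub_cancel_right])
  exact ⟨x, y, by rw [hx, sub_add_cancel]⟩

theorem exists_mul_sq_add_mul_sq_eq (hp : p ≠ 2) {c d m : ℤ_[p]} (hc : IsUnit c)
    (hd : IsUnit d) (hm : IsUnit m) : ∃ x y, c * x ^ 2 + d * y ^ 2 = m := by
  have hc₀ := toZMod_ne_zero_iff.mpr hc
  have hd₀ := toZMod_ne_zero_iff.mpr hd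
  obtain ⟨x₀, y₀, h⟩ := FiniteField.exists_root_sum_quadratic
    (f := C (toZMod c) * X ^ 2) (g := C (toZMod d) * X ^ 2 - C (toZMod m))
    (degree_C_mul_X_pow 2 hc₀)
    (by rw [degree_sub_C] <;> rw [degree_C_mul_X_pow 2 hd₀] <;> norm_num)
    (by rw [ZMod.card]; exact Nat.odd_iff.mp ((Fact.out : p.Prime).odd_of_ne_two hp))
  replace h : toZMod c * x₀ ^ 2 + toZMod d * y₀ ^ 2 = toZMod m := by
    simp only [eval_mul, eval_pow, eval_C, eval_X, eval_sub] at h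
    linear_combination h
  by_cases hx₀ : x₀ = 0
  · have hy₀ : y₀ ≠ 0 := by
      rintro rfl
      exact toZMod_ne_zero_iff.mpr hm (by simp [← h, hx₀])
    obtain ⟨y, x, hyx⟩ :=
      exists_mul_sq_add_mul_sq_eq_of_toZMod hp hd (d := c) (m := m) hy₀ (by rw [← h, add_comm])
    exact ⟨x, y, by rw [← hyx, add_comm]⟩
  · exact exists_mul_sq_add_mul_sq_eq_of_toZMod hp hc hx₀ h

end PadicInt

def PadicRepresents (p : ℕ) [Fact p.Prime] {ι : Type*} [Fintype ι] (a : ι → ℤ) (N : ℤ) :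
    Prop :=
  ∃ y : ι → ℤ_[p], ∑ i, (a i : ℤ_[p]) * y i ^ 2 = N

namespace PadicRepresents

variable {p : ℕ} [Fact p.Prime] {ι : Type*} [Fintype ι] {a : ι → ℤ} {N : ℤ}

theorem prime_sq_mul (h : PadicRepresents p a N) : PadicRepresents p a (p ^ 2 * N) := by
  obtain ⟨y, hy⟩ := h
  refine ⟨fun i => p * y i, ?_⟩
  simp_rw [mul_pow, mul_left_comm _ ((p : ℤ_[p]) ^ 2), ← Finset.mul_sum, hy]
  push_cast
  ring

theorem of_forall_not_sq_dvd (h : ∀ M : ℤ, ¬(p : ℤ) ^ 2 ∣ M → PadicRepresents p a M)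
    (hN : N ≠ 0) : PadicRepresents p a N := by
  induction hn : N.natAbs using Nat.strong_induction_on generalizing N with
  | _ n ih =>
    by_cases hdvd : (p : ℤ) ^ 2 ∣ N
    · obtain ⟨M, rfl⟩ := hdvd
      have hM : M ≠ 0 := right_ne_zero_of_mul hN
      have hp : 1 < ((p : ℤ) ^ 2).natAbs := by
        have := (Fact.out : p.Prime).one_lt
        rw [Int.natAbs_pow, Int.natAbs_natCast]
        exact Nat.one_lt_pow two_ne_zero this
      have hlt : M.natAbs < n := by
        rw [← hn, Int.natAbs_mul]
        exact lt_mul_left (Int.natAbs_pos.mpr hM) hp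
      exact_mod_cast (ih _ hlt hM rfl).prime_sq_mul
    · exact h N hdvd

theorem of_init {n : ℕ} {a : Fin (n + 1) → ℤ} (h : PadicRepresents p (Fin.init a) N) :
    PadicRepresents p a N := by
  obtain ⟨y, hy⟩ := h
  exact ⟨Fin.snoc y 0, by simpa [Fin.sum_univ_castSucc, Fin.init] using hy⟩

theorem of_update [DecidableEq ι] (x : ι → ℤ_[p]) (i : ι) {y : ℤ_[p]}
    (hy : (a i : ℤ_[p]) * y ^ 2 = N - ∑ j, (a j : ℤ_[p]) * x j ^ 2 + a i * x i ^ 2) :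
    PadicRepresents p a N := by
  refine ⟨Function.update x i y, ?_⟩
  rw [← Finset.add_sum_erase _ _ (Finset.mem_univ i), Function.update_self, hy,
    ← Finset.add_sum_erase _ _ (Finset.mem_univ i)]
  have : ∀ j ∈ Finset.univ.erase i, (a j : ℤ_[p]) * Function.update x i y j ^ 2 = a j * x j ^ 2 :=
    fun j hj => by rw [Function.update_of_ne (Finset.ne_of_mem_erase hj)]
  rw [Finset.sum_congr rfl this]
  ring

theorem quaternary_iff {b₁ b₂ b₃ : ℤ} :
    PadicRepresents p ![1, b₁, b₂, b₃] N ↔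
      ∃ x y z w : ℤ_[p], x ^ 2 + b₁ * y ^ 2 + b₂ * z ^ 2 + b₃ * w ^ 2 = N := by
  constructor
  · rintro ⟨y, h⟩
    exact ⟨y 0, y 1, y 2, y 3, by simpa [Fin.sum_univ_four] using h⟩
  · rintro ⟨x, y, z, w, h⟩
    exact ⟨![x, y, z, w], by simpa [Fin.sum_univ_four] using h⟩

end PadicRepresents

/-- In `ℤ_[2]` the divisibilities `8 ∣ …` resp. `16 ∣ …` say `8 * a i ∣ N - ∑ j, a j * x j ^ 2`,
so `PadicInt.exists_mul_sq_eq_of_eight_mul_dvd` corrects the odd coordinate `x i`. -/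
def IsTwoAdicApprox {ι : Type*} [Fintype ι] (a x : ι → ℤ) (N : ℤ) : Prop :=
  ∃ i, Odd (x i) ∧
    (Odd (a i) ∧ 8 ∣ N - ∑ j, a j * x j ^ 2 ∨ a i % 4 = 2 ∧ 16 ∣ N - ∑ j, a j * x j ^ 2)

instance {ι : Type*} [Fintype ι] [DecidableEq ι] (a x : ι → ℤ) (N : ℤ) :
    Decidable (IsTwoAdicApprox a x N) := by
  unfold IsTwoAdicApprox; infer_instance

namespace IsTwoAdicApprox

variable {ι : Type*} [Fintype ι] {a x : ι → ℤ} {N : ℤ}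

theorem of_sixteen_dvd_sub {r : ℤ} (h : IsTwoAdicApprox a x r) (hN : 16 ∣ N - r) :
    IsTwoAdicApprox a x N := by
  obtain ⟨i, hx, h⟩ := h
  exact ⟨i, hx, h.imp (.imp_right fun _ => by omega) (.imp_right fun _ => by omega)⟩

theorem padicRepresents (h : IsTwoAdicApprox a x N) : PadicRepresents 2 a N := by
  classical
  obtain ⟨i, hx, h⟩ := h
  have hunit {k : ℤ} (hk : Odd k) : IsUnit (k : ℤ_[2]) :=
    PadicInt.isUnit_intCast_iff.mpr (Int.not_even_iff_odd.mpr hk ∘ even_iff_two_dvd.mpr)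
  have hdvd : 8 * (a i : ℤ_[2]) ∣ ((N - ∑ j, a j * x j ^ 2 : ℤ) : ℤ_[2]) := by
    rcases h with ⟨ha, k, hk⟩ | ⟨ha, k, hk⟩
    · rw [hk]; push_cast
      exact mul_dvd_mul_left 8 (hunit ha).dvd
    · obtain ⟨u, hu, hau⟩ : ∃ u, Odd u ∧ a i = 2 * u :=
        ⟨a i / 2, Int.odd_iff.mpr (by omega), by omega⟩
      rw [hk, hau]; push_cast
      rw [show (16 : ℤ_[2]) = 8 * 2 by norm_num, mul_assoc]
      exact mul_dvd_mul_left 8 (mul_dvd_mul_left 2 (hunit hu).dvd)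
  obtain ⟨y, hy⟩ := PadicInt.exists_mul_sq_eq_of_eight_mul_dvd (hunit hx) (c := a i)
    (m := N - ∑ j, (a j : ℤ_[2]) * (x j : ℤ_[2]) ^ 2 + a i * (x i : ℤ_[2]) ^ 2)
    (by convert hdvd using 1; push_cast; ring)
  exact PadicRepresents.of_update (fun j => (x j : ℤ_[2])) i hy

end IsTwoAdicApprox

theorem exists_isTwoAdicApprox {b₁ b₂ b₃ : ℤ} (h₁ : 1 ≤ b₁) (h₁' : b₁ ≤ 2) (h₂ : b₁ ≤ b₂)
    (h₂' : b₂ ≤ b₁ + 2) (h₃ : b₂ ≤ b₃) (h₃' : b₃ ≤ b₁ + b₂ + 2) :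
    ∀ r ∈ [1, 2, 3, 5, 6, 7, 9, 10, 11, 13, 14, 15], ∃ x₀ ∈ [0, 1, 2], ∃ x₁ ∈ [0, 1, 2],
      ∃ x₂ ∈ [0, 1, 2], ∃ x₃ ∈ [0, 1, 2],
        IsTwoAdicApprox ![1, b₁, b₂, b₃] ![x₀, x₁, x₂, x₃] r := by
  interval_cases b₁ <;> interval_cases b₂ <;> interval_cases b₃ <;> decide +kernel

theorem padicRepresents_two_of_escalator {b₁ b₂ b₃ : ℤ} (h₁ : 1 ≤ b₁) (h₁' : b₁ ≤ 2)
    (h₂ : b₁ ≤ b₂) (h₂' : b₂ ≤ b₁ + 2) (h₃ : b₂ ≤ b₃) (h₃' : b₃ ≤ b₁ + b₂ + 2) {N : ℤ}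
    (hN : ¬4 ∣ N) : PadicRepresents 2 ![1, b₁, b₂, b₃] N := by
  have hr : N % 16 ∈ [1, 2, 3, 5, 6, 7, 9, 10, 11, 13, 14, 15] := by
    simp only [List.mem_cons, List.not_mem_nil, or_false]
    omega
  obtain ⟨x₀, -, x₁, -, x₂, -, x₃, -, hx⟩ :=
    exists_isTwoAdicApprox h₁ h₁' h₂ h₂' h₃ h₃' (N % 16) hr
  exact (hx.of_sixteen_dvd_sub (by omega)).padicRepresents

theorem padicRepresents_of_ne_two {p : ℕ} [Fact p.Prime] (hp : p ≠ 2) {b₁ b₂ b₃ : ℤ}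
    (hb₁ : ¬(p : ℤ) ∣ b₁) (hb₂ : 0 < b₂ ∧ b₂ ≤ 4) (hb₃ : 0 < b₃ ∧ b₃ ≤ 8) {N : ℤ}
    (hN : ¬(p : ℤ) ^ 2 ∣ N) : PadicRepresents p ![1, b₁, b₂, b₃] N := by
  rw [PadicRepresents.quaternary_iff]
  have binary {d m : ℤ} (hd : ¬(p : ℤ) ∣ d) (hm : ¬(p : ℤ) ∣ m) :
      ∃ x y : ℤ_[p], x ^ 2 + d * y ^ 2 = m := by
    simpa using PadicInt.exists_mul_sq_add_mul_sq_eq hp (c := 1) isUnit_one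
      (PadicInt.isUnit_intCast_iff.mpr hd) (PadicInt.isUnit_intCast_iff.mpr hm)
  by_cases hpN : (p : ℤ) ∣ N
  swap
  · obtain ⟨x, y, h⟩ := binary hb₁ hpN
    exact ⟨x, y, 0, 0, by simpa using h⟩
  by_cases hp₂ : (p : ℤ) ∣ b₂
  swap
  · obtain ⟨x, y, h⟩ := binary hb₁ (m := N - b₂) fun h => hp₂ (by simpa using dvd_sub hpN h)
    exact ⟨x, y, 1, 0, by push_cast at h; linear_combination h⟩
  by_cases hp₃ : (p : ℤ) ∣ b₃
  swap
  · obtain ⟨x, y, h⟩ := binary hb₁ (m := N - b₃) fun h => hp₃ (by simpa using dvd_sub hpN h)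
    exact ⟨x, y, 0, 1, by push_cast at h; linear_combination h⟩
  -- Now `p = 3 = b₂` and `3 ∣ b₃`, so `N / 3` is represented by `z ^ 2 + (b₃ / 3) * w ^ 2`.
  have hp3 : p = 3 := by
    have h3 : 3 ≤ p := (Fact.out : p.Prime).two_le.lt_of_ne' hp
    have h4 : p ≤ 4 := by exact_mod_cast (Int.le_of_dvd hb₂.1 hp₂).trans hb₂.2
    interval_cases p
    · rfl
    · exact absurd (Fact.out : Nat.Prime 4) (by norm_num)
  subst hp3
  obtain ⟨M, rfl⟩ := hpN
  obtain ⟨v, rfl⟩ := hp₃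
  have hb₂3 : b₂ = 3 := by omega
  obtain ⟨x, y, h⟩ := binary (d := v) (m := M) (by omega) fun h => hN (by
    rw [pow_two]; exact mul_dvd_mul_left _ h)
  exact ⟨0, 0, x, y, by rw [hb₂3]; push_cast; linear_combination 3 * h⟩

theorem escalator_bounds {a : Fin 5 → ℤ} (h0 : a 0 = 1)
    (hchain : ∀ i : Fin 4,
      a i.castSucc ≤ a i.succ ∧
      a i.succ ≤ (∑ j ∈ Finset.univ.filter (fun j => j ≤ i.castSucc), a j) + 1) :
    1 ≤ a 1 ∧ a 1 ≤ 2 ∧ a 1 ≤ a 2 ∧ a 2 ≤ a 1 + 2 ∧ a 2 ≤ a 3 ∧ a 3 ≤ a 1 + a 2 + 2 := by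
  have h₀ := hchain 0
  have h₁ := hchain 1
  have h₂ := hchain 2
  simp only [Nat.reduceAdd, Finset.sum_filter, Fin.sum_univ_five, Fin.reduceCastSucc,
    Fin.reduceSucc, Fin.reduceLE, reduceIte] at h₀ h₁ h₂
  omega

theorem stmt16_general (a : Fin 5 → ℤ) (h0 : a 0 = 1)
    (hchain : ∀ i : Fin 4,
      a i.castSucc ≤ a i.succ ∧
      a i.succ ≤ (∑ j ∈ Finset.univ.filter (fun j => j ≤ i.castSucc), a j) + 1) :
    ∀ (p : ℕ) [Fact p.Prime], ∀ N : ℤ, 0 < N →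
      ∃ y : Fin 5 → ℤ_[p], ∑ i, (a i : ℤ_[p]) * (y i) ^ 2 = (N : ℤ_[p]) := by
  obtain ⟨h₁, h₁', h₂, h₂', h₃, h₃'⟩ := escalator_bounds h0 hchain
  have hinit : Fin.init a = ![1, a 1, a 2, a 3] := by
    ext i; fin_cases i <;> simp [Fin.init, h0]
  intro p _ N hN
  refine PadicRepresents.of_init (hinit ▸ PadicRepresents.of_forall_not_sq_dvd ?_ hN.ne')
  intro M hM
  rcases eq_or_ne p 2 with rfl | hp
  · exact padicRepresents_two_of_escalator h₁ h₁' h₂ h₂' h₃ h₃' (by simpa using hM)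
  · refine padicRepresents_of_ne_two hp (fun h => hp ?_) (by omega) (by omega) hM
    have := (Fact.out : p.Prime).two_le
    have := Int.le_of_dvd (by omega) h
    omega

/-- for any escalation tuple `(a₁,…,a₅)` (i.e. `a₁ = 1` and
`aᵢ ≤ a_{i+1} ≤ a₁+⋯+aᵢ+1` for `i = 1,…,4`), the diagonal quadratic form
`a₁y₁² + ⋯ + a₅y₅²` represents every positive integer over `ℤ_p` for every prime `p`. -/
theorem stmt16 (a : Fin 5 → ℤ) (ha : ∀ i, 0 < a i) (h0 : a 0 = 1)
    (hchain : ∀ i : Fin 4,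
      a i.castSucc ≤ a i.succ ∧
      a i.succ ≤ (∑ j ∈ Finset.univ.filter (fun j => j ≤ i.castSucc), a j) + 1) :
    ∀ (p : ℕ) [Fact p.Prime], ∀ N : ℤ, 0 < N →
      ∃ y : Fin 5 → ℤ_[p], ∑ i, (a i : ℤ_[p]) * (y i) ^ 2 = (N : ℤ_[p]) :=
  stmt16_general a h0 hchain
end
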